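/- Let n > q ≥ 1 be coprime integers and let n/q = [b_1, …, b_l] and n/(n−q) = [a_1, …, a_k] be the Hirzebruch–Jung continued fraction expansions. Then Σ_{i=1}^k (a_i − 1) = Σ_{i=1}^l (b_i − 1) = k + l − 1. -/

import Mathlib

/-!
If `r = [b₁, …, b_l]` and `s = [a₁, …, a_k]` satisfy `1/r + 1/s = 1` (as `n/q` and `n/(n-q)`
do), then one of them is at least `2`. Either `r = s = 2`, both expansions being `[2]`, or, say,
`r > 2 > s`; then `b₁ ≥ 3` and `a₁ = 2`, and `[b₁ - 1, b₂, …, b_l] = r - 1` and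
`[a₂, …, a_k] = 1/(2 - s)` are again dual in this sense.
Each side of the identity drops by one under this step, so it follows by induction on `k + l`.
-/

/-- Evaluation of a Hirzebruch–Jung continued fraction `[b₁, …, b_l]`,
i.e. `b₁ - 1/(b₂ - 1/(⋯ - 1/b_l))`, as a rational number. -/
def hjEval : List ℤ → ℚ
  | [] => 0
  | b :: l => (b : ℚ) - 1 / hjEval l

lemma hjEval_cons (x : ℤ) (t : List ℤ) : hjEval (x :: t) = x - (hjEval t)⁻¹ := by
  simp [hjEval]

lemma inv_hjEval_lt_one {l : List ℤ} (h2 : ∀ x ∈ l, 2 ≤ x) : (hjEval l)⁻¹ < 1 := by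
  induction l with
  | nil => simp [hjEval]
  | cons x t ih =>
    have hx : (2 : ℚ) ≤ x := by exact_mod_cast h2 x List.mem_cons_self
    have ht := ih fun y hy => h2 y (List.mem_cons_of_mem _ hy)
    apply inv_lt_one_of_one_lt₀
    rw [hjEval_cons]
    linarith

lemma one_lt_hjEval {l : List ℤ} (hl : l ≠ []) (h2 : ∀ x ∈ l, 2 ≤ x) : 1 < hjEval l := by
  obtain ⟨x, t, rfl⟩ := List.exists_cons_of_ne_nil hl
  have hx : (2 : ℚ) ≤ x := by exact_mod_cast h2 x List.mem_cons_self
  have ht := inv_hjEval_lt_one fun y hy => h2 y (List.mem_cons_of_mem _ hy)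
  rw [hjEval_cons]
  linarith

lemma inv_hjEval_nonneg {l : List ℤ} (h2 : ∀ x ∈ l, 2 ≤ x) : 0 ≤ (hjEval l)⁻¹ := by
  rcases eq_or_ne l [] with rfl | hl
  · simp [hjEval]
  · exact inv_nonneg.mpr (one_pos.trans (one_lt_hjEval hl h2)).le

lemma head_eq_two_of_hjEval_cons_lt_two {x : ℤ} {t : List ℤ} (h2 : ∀ y ∈ x :: t, 2 ≤ y)
    (hlt : hjEval (x :: t) < 2) : x = 2 := by
  have ht := inv_hjEval_lt_one fun y hy => h2 y (List.mem_cons_of_mem _ hy)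
  rw [hjEval_cons] at hlt
  have hx3 : (x : ℚ) < 3 := by linarith
  have := h2 x List.mem_cons_self
  have : x < 3 := by exact_mod_cast hx3
  omega

lemma eq_singleton_two_of_hjEval_eq_two {l : List ℤ} (h2 : ∀ x ∈ l, 2 ≤ x)
    (hl : hjEval l = 2) : l = [2] := by
  obtain ⟨x, t, rfl⟩ := List.exists_cons_of_ne_nil (l := l) (by rintro rfl; simp [hjEval] at hl)
  have ht2 : ∀ y ∈ t, 2 ≤ y := fun y hy => h2 y (List.mem_cons_of_mem _ hy)
  have hlt := inv_hjEval_lt_one ht2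
  have hnonneg := inv_hjEval_nonneg ht2
  rw [hjEval_cons] at hl
  have hx : x = 2 := by
    have := h2 x List.mem_cons_self
    have : x < 3 := by exact_mod_cast (by linarith : (x : ℚ) < 3)
    omega
  subst hx
  have ht : t = [] := by
    by_contra ht
    have h0 : hjEval t = 0 := inv_eq_zero.mp (by linarith)
    linarith [one_lt_hjEval ht ht2]
  rw [ht]

lemma inv_sub_one_add_two_sub_eq_one {K : Type*} [Field K] {r s : K} (hr0 : r ≠ 0) (hr1 : r ≠ 1)
    (h : r⁻¹ + s⁻¹ = 1) : (r - 1)⁻¹ + (2 - s) = 1 := by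
  have hr1' : r - 1 ≠ 0 := sub_ne_zero.mpr hr1
  have hs : s = r / (r - 1) := by
    rw [← inv_inv s, eq_sub_of_add_eq' h]
    field_simp
  rw [hs]
  field_simp
  ring

lemma hjEval_eq_zero_or_one_lt (l : List ℤ) (h2 : ∀ x ∈ l, 2 ≤ x) :
    hjEval l = 0 ∨ 1 < hjEval l := by
  rcases eq_or_ne l [] with rfl | hl
  · exact Or.inl rfl
  · exact Or.inr (one_lt_hjEval hl h2)

lemma one_lt_hjEval_of_inv_add_inv {a b : List ℤ} (ha2 : ∀ x ∈ a, 2 ≤ x) (hb2 : ∀ x ∈ b, 2 ≤ x)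
    (hdual : (hjEval a)⁻¹ + (hjEval b)⁻¹ = 1) : 1 < hjEval a := by
  refine (hjEval_eq_zero_or_one_lt a ha2).resolve_left fun ha => ?_
  rw [ha, inv_zero, zero_add, inv_eq_one] at hdual
  rcases hjEval_eq_zero_or_one_lt b hb2 with hb | hb <;> linarith

lemma exists_reduction_of_inv_hjEval_add_inv_hjEval {a b : List ℤ}
    (ha2 : ∀ x ∈ a, 2 ≤ x) (hb2 : ∀ x ∈ b, 2 ≤ x) (hdual : (hjEval a)⁻¹ + (hjEval b)⁻¹ = 1)
    (hb : 2 < hjEval b) :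
    ∃ ta y tb, a = 2 :: ta ∧ b = y :: tb ∧ 3 ≤ y ∧
      (hjEval ta)⁻¹ + (hjEval ((y - 1) :: tb))⁻¹ = 1 := by
  have ha1 := one_lt_hjEval_of_inv_add_inv ha2 hb2 hdual
  have ha : hjEval a < 2 := by
    have := (inv_lt_inv₀ (by positivity) (by positivity)).mpr hb
    rw [← inv_lt_inv₀ (by positivity) (by positivity)]
    linarith
  obtain ⟨x, ta, rfl⟩ := List.exists_cons_of_ne_nil (l := a) <| by
    rintro rfl; norm_num [hjEval] at ha1
  obtain ⟨y, tb, rfl⟩ := List.exists_cons_of_ne_nil (l := b) <| by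
    rintro rfl; norm_num [hjEval] at hb
  obtain rfl : x = 2 := head_eq_two_of_hjEval_cons_lt_two ha2 ha
  have hy : 3 ≤ y := by
    have := inv_hjEval_nonneg fun z hz => hb2 z (List.mem_cons_of_mem _ hz)
    rw [hjEval_cons] at hb
    have : 2 < y := by exact_mod_cast (by linarith : (2 : ℚ) < y)
    omega
  refine ⟨ta, y, tb, rfl, rfl, hy, ?_⟩
  have hta : (hjEval ta)⁻¹ = 2 - hjEval (2 :: ta) := by rw [hjEval_cons]; push_cast; ring
  have htb : hjEval ((y - 1) :: tb) = hjEval (y :: tb) - 1 := by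
    rw [hjEval_cons, hjEval_cons]; push_cast; ring
  rw [hta, htb, add_comm]
  exact inv_sub_one_add_two_sub_eq_one (by positivity) (by linarith) (by rwa [add_comm])

theorem sum_map_sub_one_eq_of_inv_hjEval_add_inv_hjEval (a b : List ℤ)
    (ha2 : ∀ x ∈ a, 2 ≤ x) (hb2 : ∀ x ∈ b, 2 ≤ x) (hdual : (hjEval a)⁻¹ + (hjEval b)⁻¹ = 1) :
    (a.map (fun x => x - 1)).sum = (a.length : ℤ) + b.length - 1
    ∧ (b.map (fun x => x - 1)).sum = (a.length : ℤ) + b.length - 1 := by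
  induction hN : a.length + b.length using Nat.strong_induction_on generalizing a b with
  | _ N ih =>
  wlog hb : 2 ≤ hjEval b generalizing a b
  · have ha1 := one_lt_hjEval_of_inv_add_inv ha2 hb2 hdual
    have hb1 := one_lt_hjEval_of_inv_add_inv hb2 ha2 (by rwa [add_comm])
    have ha : 2 ≤ hjEval a := by
      by_contra ha
      have := (inv_lt_inv₀ (by positivity) (by positivity)).mpr (not_le.mp ha)
      have := (inv_lt_inv₀ (by positivity) (by positivity)).mpr (not_le.mp hb)
      linarith
    obtain ⟨hb', ha'⟩ := this b a hb2 ha2 (by rwa [add_comm]) (by omega) ha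
    exact ⟨ha'.trans (by ring), hb'.trans (by ring)⟩
  rcases hb.eq_or_lt with hb | hb
  · have ha : hjEval a = 2 := by
      rw [← hb] at hdual
      rw [← inv_inj, eq_sub_of_add_eq hdual]
      norm_num
    rw [eq_singleton_two_of_hjEval_eq_two ha2 ha, eq_singleton_two_of_hjEval_eq_two hb2 hb.symm]
    norm_num
  obtain ⟨ta, y, tb, rfl, rfl, hy, hdual'⟩ :=
    exists_reduction_of_inv_hjEval_add_inv_hjEval ha2 hb2 hdual hb
  have hta2 : ∀ z ∈ ta, 2 ≤ z := fun z hz => ha2 z (List.mem_cons_of_mem _ hz)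
  have htb2 : ∀ z ∈ (y - 1) :: tb, 2 ≤ z := by
    rintro z (_ | ⟨_, hz⟩)
    · omega
    · exact hb2 z (List.mem_cons_of_mem _ hz)
  obtain ⟨hsa, hsb⟩ := ih _ (by simp at hN ⊢; omega) ta ((y - 1) :: tb) hta2 htb2 hdual' rfl
  simp only [List.map_cons, List.sum_cons, List.length_cons] at hsa hsb ⊢
  push_cast at hsa hsb ⊢
  constructor <;> linarith

theorem riemenschneider_general (n q : ℤ) (hq1 : 1 ≤ q) (hqn : q < n)
    (b a : List ℤ) (hb2 : ∀ x ∈ b, 2 ≤ x) (ha2 : ∀ x ∈ a, 2 ≤ x)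
    (hbeval : hjEval b = (n : ℚ) / (q : ℚ))
    (haeval : hjEval a = (n : ℚ) / ((n : ℚ) - (q : ℚ))) :
    (a.map (fun x => x - 1)).sum = (b.map (fun x => x - 1)).sum
    ∧ (b.map (fun x => x - 1)).sum = (a.length : ℤ) + (b.length : ℤ) - 1 := by
  have hn : (n : ℚ) ≠ 0 := by exact_mod_cast (by omega : n ≠ 0)
  have hdual : (hjEval a)⁻¹ + (hjEval b)⁻¹ = 1 := by
    rw [haeval, hbeval, inv_div, inv_div, ← add_div, sub_add_cancel, div_self hn]
  obtain ⟨ha, hb⟩ := sum_map_sub_one_eq_of_inv_hjEval_add_inv_hjEval a b ha2 hb2 hdual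
  exact ⟨ha.trans hb.symm, hb⟩

/-- (Riemenschneider) Let `n > q ≥ 1` be coprime, with Hirzebruch–Jung continued fraction
expansions `n/q = [b₁, …, b_l]` and `n/(n-q) = [a₁, …, a_k]`.
Then `Σ (aᵢ - 1) = Σ (bᵢ - 1) = k + l - 1`. -/
theorem riemenschneider (n q : ℤ) (hq1 : 1 ≤ q) (hqn : q < n) (hcop : IsCoprime q n)
    (b a : List ℤ) (hb2 : ∀ x ∈ b, 2 ≤ x) (ha2 : ∀ x ∈ a, 2 ≤ x)
    (hbeval : hjEval b = (n : ℚ) / (q : ℚ))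
    (haeval : hjEval a = (n : ℚ) / ((n : ℚ) - (q : ℚ))) :
    (a.map (fun x => x - 1)).sum = (b.map (fun x => x - 1)).sum
    ∧ (b.map (fun x => x - 1)).sum = (a.length : ℤ) + (b.length : ℤ) - 1 :=
  riemenschneider_general n q hq1 hqn b a hb2 ha2 hbeval haeval
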